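/- Cassini-type identity: for all integers p, q and all natural numbers n ≥ 2, g_{n+1}·g_{n-1} − g_n^2 = (−1)^{n−1}·(p^2 + 5q^2 + 5pq), where g is the generalized Fibonacci-Lucas sequence with parameters p, q. -/
import Mathlib


def g (p q : ℤ) : ℕ → ℤ
  | 0 => p + 2 * q
  | 1 => q
  | n + 2 => g p q (n + 1) + g p q n

lemma aux10 (p q : ℤ) : ∀ m : ℕ,
    g p q (m + 3) * g p q (m + 1) - (g p q (m + 2)) ^ 2 =
      (-1 : ℤ) ^ (m + 1) * (p ^ 2 + 5 * q ^ 2 + 5 * p * q) := by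
  intro m
  induction m with
  | zero => simp [g]; ring
  | succ k ih =>
    have h1 : g p q (k + 4) = g p q (k + 3) + g p q (k + 2) := rfl
    have h2 : g p q (k + 3) = g p q (k + 2) + g p q (k + 1) := rfl
    have hp : ((-1 : ℤ)) ^ (k + 2) = -((-1 : ℤ) ^ (k + 1)) := by ring
    rw [h2] at ih
    rw [show k + 1 + 3 = k + 4 from rfl, show k + 1 + 2 = k + 3 from rfl,
      show k + 1 + 1 = k + 2 from rfl, h1, h2, hp]
    linear_combination -ih

theorem stmt10 (p q : ℤ) : ∀ n : ℕ, 2 ≤ n →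
    g p q (n + 1) * g p q (n - 1) - (g p q n) ^ 2 =
      (-1 : ℤ) ^ (n - 1) * (p ^ 2 + 5 * q ^ 2 + 5 * p * q) := by
  intro n hn
  obtain ⟨m, rfl⟩ := Nat.exists_eq_add_of_le hn
  have := aux10 p q m
  simpa [Nat.add_comm 2 m, Nat.add_sub_cancel] using this
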